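/- arXiv:2210.00885 — 5 statements merged into one kernel-verified Lean document; each statement's English description precedes it below -/
import Mathlib

section
/- For every probability density f on the real line, the square of the essential supremum of f times the second moment of f is at least 1/12: ‖f‖_∞² · ∫ t² f(t) dt ≥ 1/12. -/
/-!
Bathtub principle: among densities bounded by `M`, the second moment is smallest for
`M · 𝟙[-c, c]` with `c = 1 / (2M)`, whose second moment is `2Mc³/3 = 1 / (12M²)`.
The comparison is the pointwise inequality `(t² - c²) (g t - M · 𝟙[-c, c] t) ≥ 0`,
rearranged without subtraction so that it can be integrated in `ℝ≥0∞`.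
-/

open MeasureTheory ENNReal

theorem ENNReal.mul_add_mul_le_mul_add_mul {w a g M : ℝ≥0∞} (hwa : w ≤ a) (hgM : g ≤ M) :
    w * M + a * g ≤ w * g + a * M := by
  obtain ⟨d, rfl⟩ := exists_add_of_le hwa
  obtain ⟨e, rfl⟩ := exists_add_of_le hgM
  calc w * (g + e) + (w + d) * g = w * g + (w * g + w * e + d * g) := by ring
    _ ≤ w * g + (w * g + w * e + d * g + d * e) := add_le_add_right le_self_add _
    _ = w * g + (w + d) * (g + e) := by ring

theorem setLIntegral_mul_add_mul_lintegral_le {α : Type*} [MeasurableSpace α] {μ : Measure α}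
    {w g : α → ℝ≥0∞} {a M : ℝ≥0∞} {S : Set α} (hS : MeasurableSet S)
    (hwS : ∀ x ∈ S, w x ≤ a) (hwSc : ∀ x ∉ S, a ≤ w x) (hgM : ∀ᵐ x ∂μ, g x ≤ M) :
    ∫⁻ x in S, w x * M ∂μ + a * ∫⁻ x, g x ∂μ ≤ ∫⁻ x, w x * g x ∂μ + a * (M * μ S) := by
  have hpointwise : ∀ᵐ x ∂μ, S.indicator (fun x => w x * M) x + a * g x ≤
      w x * g x + a * S.indicator (fun _ => M) x := by
    filter_upwards [hgM] with x hx
    by_cases hxS : x ∈ S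
    · simpa [hxS] using ENNReal.mul_add_mul_le_mul_add_mul (hwS x hxS) hx
    · simpa [hxS] using mul_le_mul_left (hwSc x hxS) (g x)
  calc ∫⁻ x in S, w x * M ∂μ + a * ∫⁻ x, g x ∂μ
      ≤ ∫⁻ x, S.indicator (fun x => w x * M) x ∂μ + ∫⁻ x, a * g x ∂μ := by
        rw [lintegral_indicator hS]
        gcongr
        exact lintegral_const_mul_le a g
    _ ≤ ∫⁻ x, (S.indicator (fun x => w x * M) x + a * g x) ∂μ := le_lintegral_add _ _
    _ ≤ ∫⁻ x, (w x * g x + a * S.indicator (fun _ => M) x) ∂μ := lintegral_mono_ae hpointwise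
    _ = ∫⁻ x, w x * g x ∂μ + a * (M * μ S) := by
        rw [lintegral_add_right _ ((measurable_const.indicator hS).const_mul a),
          lintegral_const_mul _ (measurable_const.indicator hS), lintegral_indicator_const hS]

theorem setLIntegral_Icc_sq {c : ℝ} (hc : 0 ≤ c) :
    ∫⁻ t in Set.Icc (-c) c, ENNReal.ofReal (t ^ 2) = ENNReal.ofReal (2 * c ^ 3 / 3) := by
  rw [← ofReal_integral_eq_lintegral_ofReal (continuous_pow 2).integrableOn_Icc
      (ae_of_all _ fun t => sq_nonneg t), integral_Icc_eq_integral_Ioc,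
    ← intervalIntegral.integral_of_le (by linarith), integral_pow]
  ring_nf

theorem lintegral_sq_mul_ne_zero {g : ℝ → ℝ≥0∞} (hg : ∫⁻ t, g t ≠ 0) :
    ∫⁻ t, ENNReal.ofReal (t ^ 2) * g t ≠ 0 := by
  obtain ⟨g', hg'_meas, hg'_le, hg'_eq⟩ := exists_measurable_le_lintegral_eq volume g
  rw [hg'_eq] at hg
  contrapose! hg
  have hwg' : ∫⁻ t, ENNReal.ofReal (t ^ 2) * g' t = 0 :=
    le_zero_iff.mp (hg ▸ lintegral_mono fun t => mul_le_mul_right (hg'_le t) _)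
  rw [lintegral_eq_zero_iff (by fun_prop)] at hwg'
  refine (lintegral_eq_zero_iff hg'_meas).mpr ?_
  filter_upwards [hwg', Measure.ae_ne volume 0] with t ht ht0
  simpa [ht0] using ht

theorem ofReal_one_div_twelve_mul_sq_le_lintegral_sq_mul {g : ℝ → ℝ≥0∞} {m : ℝ} (hm : 0 < m)
    (hg : ∫⁻ t, g t = 1) (hgm : ∀ᵐ t, g t ≤ ENNReal.ofReal m) :
    ENNReal.ofReal (1 / (12 * m ^ 2)) ≤ ∫⁻ t, ENNReal.ofReal (t ^ 2) * g t := by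
  set c := 1 / (2 * m) with hc_def
  have hc : 0 < c := by positivity
  have hmass : ENNReal.ofReal m * volume (Set.Icc (-c) c) = 1 := by
    rw [Real.volume_Icc, ← ENNReal.ofReal_mul hm.le,
      show m * (c - -c) = 1 by rw [hc_def]; field_simp; ring, ofReal_one]
  have hsq_le {t : ℝ} (ht : t ∈ Set.Icc (-c) c) :
      ENNReal.ofReal (t ^ 2) ≤ ENNReal.ofReal (c ^ 2) :=
    ENNReal.ofReal_le_ofReal (sq_le_sq' ht.1 ht.2)
  have hsq_ge {t : ℝ} (ht : t ∉ Set.Icc (-c) c) :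
      ENNReal.ofReal (c ^ 2) ≤ ENNReal.ofReal (t ^ 2) := by
    rw [Set.mem_Icc, ← abs_le, not_le] at ht
    exact ENNReal.ofReal_le_ofReal (sq_le_sq.mpr (by rw [abs_of_pos hc]; exact ht.le))
  have hbathtub := setLIntegral_mul_add_mul_lintegral_le measurableSet_Icc
    (fun t => hsq_le) (fun t => hsq_ge) hgm
  rw [hg, hmass, lintegral_mul_const _ (by fun_prop), setLIntegral_Icc_sq hc.le,
    ← ENNReal.ofReal_mul (by positivity), mul_one] at hbathtub
  convert ENNReal.le_of_add_le_add_right ENNReal.ofReal_ne_top hbathtub using 2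
  rw [hc_def]
  field_simp
  ring

theorem one_div_twelve_le_sq_mul_lintegral_sq_mul {g : ℝ → ℝ≥0∞} {M : ℝ≥0∞}
    (hg : ∫⁻ t, g t = 1) (hgM : ∀ᵐ t, g t ≤ M) :
    1 / 12 ≤ M ^ 2 * ∫⁻ t, ENNReal.ofReal (t ^ 2) * g t := by
  have hM_ne_zero : M ≠ 0 := by
    rintro rfl
    simpa [hg] using lintegral_mono_ae hgM
  rcases eq_or_ne M ⊤ with rfl | hM_ne_top
  · rw [top_pow two_ne_zero, top_mul (lintegral_sq_mul_ne_zero (hg ▸ one_ne_zero))]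
    exact le_top
  rw [← ofReal_toReal hM_ne_top] at hgM ⊢
  have hm := toReal_pos hM_ne_zero hM_ne_top
  calc 1 / 12 = ENNReal.ofReal M.toReal ^ 2 * ENNReal.ofReal (1 / (12 * M.toReal ^ 2)) := by
        rw [← ofReal_pow hm.le, ← ofReal_mul (by positivity),
          show M.toReal ^ 2 * (1 / (12 * M.toReal ^ 2)) = 1 / 12 by field_simp,
          ofReal_div_of_pos (by norm_num)]
        norm_num
    _ ≤ _ := by
        gcongr
        exact ofReal_one_div_twelve_mul_sq_le_lintegral_sq_mul hm hg hgM

theorem density_sup_sq_mul_second_moment_ge_general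
    (f : ℝ → ℝ)
    (hdens : ∫⁻ t, ENNReal.ofReal (f t) = 1) :
    (1 : ℝ≥0∞) / 12 ≤
      (eLpNorm f ⊤ volume) ^ 2 * ∫⁻ t, ENNReal.ofReal (t ^ 2 * f t) := by
  have hf_le : ∀ᵐ t, ENNReal.ofReal (f t) ≤ eLpNorm f ⊤ volume := by
    filter_upwards [ae_le_eLpNormEssSup (f := f) (μ := volume)] with t ht
    rw [eLpNorm_exponent_top]
    exact (Real.ofReal_le_enorm _).trans ht
  simp_rw [ENNReal.ofReal_mul (sq_nonneg _)]
  exact one_div_twelve_le_sq_mul_lintegral_sq_mul hdens hf_le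

/-- Moriguti's inequality: for every probability density `f` on the real line,
`‖f‖_∞² · ∫ t² f(t) dt ≥ 1/12` (the second moment may be infinite). -/
theorem density_sup_sq_mul_second_moment_ge
    (f : ℝ → ℝ) (hmeas : Measurable f) (hnonneg : ∀ t, 0 ≤ f t)
    (hdens : ∫⁻ t, ENNReal.ofReal (f t) = 1) :
    (1 : ℝ≥0∞) / 12 ≤
      (eLpNorm f ⊤ volume) ^ 2 * ∫⁻ t, ENNReal.ofReal (t ^ 2 * f t) :=
  density_sup_sq_mul_second_moment_ge_general f hdens
end

section
/- For an integrable real random variable X, E|X| = (1/π) ∫_{ℝ} (1 − Re E[e^{itX}]) t^{−2} dt. -/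
/-!
Since `1 - cos (t x) ≥ 0`, Fubini lets us exchange the expectation and the `t`-integral, and the
substitution `t ↦ t / x` reduces the inner integral to `|x| ∫ (1 - cos t) / t² dt`. The constant
`∫ (1 - cos t) / t² dt = π` comes from Fourier inversion at `0` for the tent function
`max 0 (1 - |x|)`, whose Fourier transform is `2 (1 - cos (2πξ)) / (2πξ)²`.
-/

open MeasureTheory Real FourierTransform

lemma one_sub_cos_div_sq_le (t : ℝ) : (1 - cos t) / t ^ 2 ≤ 3 * (1 + t ^ 2)⁻¹ := by
  rcases eq_or_ne t 0 with rfl | ht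
  · simp
  rw [div_le_iff₀ (by positivity), ← div_eq_mul_inv, div_mul_eq_mul_div, le_div_iff₀ (by positivity)]
  nlinarith [one_sub_sq_div_two_le_cos (x := t), cos_le_one t, neg_one_le_cos t, sq_nonneg t]

lemma integrable_one_sub_cos_div_sq : Integrable fun t : ℝ => (1 - cos t) / t ^ 2 := by
  refine (integrable_inv_one_add_sq.const_mul 3).mono'
    ((by fun_prop : Measurable fun t : ℝ => (1 - cos t) / t ^ 2).aestronglyMeasurable)
    (.of_forall fun t => ?_)
  rw [norm_of_nonneg (div_nonneg (sub_nonneg.mpr (cos_le_one t)) (sq_nonneg t))]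
  exact one_sub_cos_div_sq_le t

lemma fourier_ofReal_of_even {f : ℝ → ℝ} (hf : Integrable f) (heven : ∀ x, f (-x) = f x)
    (ξ : ℝ) : 𝓕 (fun x => (f x : ℂ)) ξ = ↑(∫ x, f x * cos (2 * π * ξ * x)) := by
  set F : ℝ → ℂ := fun v => Complex.exp (↑(-2 * π * v * ξ) * Complex.I) * (f v : ℂ)
  have hF : Integrable F :=
    (hf.ofReal (𝕜 := ℂ)).bdd_mul (c := 1) (by fun_prop)
      (.of_forall fun v => (Complex.norm_exp_ofReal_mul_I _).le)
  have hsymm (v : ℝ) : (F v + F (-v)) / 2 = ↑(f v * cos (2 * π * ξ * v)) := by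
    simp only [F, heven]
    push_cast
    rw [Complex.cos]
    ring_nf
  calc 𝓕 (fun x => (f x : ℂ)) ξ = ∫ v, F v := fourier_real_eq_integral_exp_smul _ ξ
    _ = ∫ v, (F v + F (-v)) / 2 := by
      rw [integral_div, integral_add hF hF.comp_neg, integral_neg_eq_self]
      ring
    _ = ↑(∫ x, f x * cos (2 * π * ξ * x)) :=
      (integral_congr_ae (.of_forall hsymm)).trans integral_complex_ofReal

def tent (x : ℝ) : ℝ := max 0 (1 - |x|)

lemma continuous_tent : Continuous tent := by unfold tent; fun_prop

lemma tent_neg (x : ℝ) : tent (-x) = tent x := by simp [tent]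

lemma tent_eq_zero {x : ℝ} (hx : x ∉ Set.Ioo (-1) 1) : tent x = 0 := by
  rw [Set.mem_Ioo, ← abs_lt] at hx
  exact max_eq_left (by linarith)

lemma integrable_tent : Integrable tent :=
  continuous_tent.integrable_of_hasCompactSupport <|
    .intro isCompact_Icc fun _ hx => tent_eq_zero fun h => hx (Set.Ioo_subset_Icc_self h)

lemma hasDerivAt_one_sub_mul_sin_sub_cos {a : ℝ} (ha : a ≠ 0) (x : ℝ) :
    HasDerivAt (fun y => (1 - y) * sin (a * y) / a - cos (a * y) / a ^ 2)
      ((1 - x) * cos (a * x)) x := by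
  have hlin : HasDerivAt (fun y => a * y) a x := by simpa using (hasDerivAt_id x).const_mul a
  have h := ((((hasDerivAt_id' x).const_sub 1).fun_mul hlin.sin).div_const a).fun_sub
    (hlin.cos.div_const (a ^ 2))
  refine h.congr_deriv ?_
  field_simp
  ring

lemma integral_one_sub_mul_cos {a : ℝ} (ha : a ≠ 0) :
    ∫ x in (0 : ℝ)..1, (1 - x) * cos (a * x) = (1 - cos a) / a ^ 2 := by
  rw [intervalIntegral.integral_eq_sub_of_hasDerivAt
    (fun x _ => hasDerivAt_one_sub_mul_sin_sub_cos ha x)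
    ((by fun_prop : Continuous fun x : ℝ => (1 - x) * cos (a * x)).intervalIntegrable _ _)]
  field_simp
  simp
  ring

lemma integral_tent_mul_cos {a : ℝ} (ha : a ≠ 0) :
    ∫ x, tent x * cos (a * x) = 2 * (1 - cos a) / a ^ 2 := by
  set f := fun x => tent x * cos (a * x)
  have hf : Continuous f := continuous_tent.mul (by fun_prop)
  have hsupp : Function.support f ⊆ Set.Ioc (-1) 1 := fun x hx =>
    Set.Ioo_subset_Ioc_self (by_contra fun h => hx (by simp [f, tent_eq_zero h]))
  have hneg : ∫ x in (-1 : ℝ)..0, f x = ∫ x in (0 : ℝ)..1, f x := by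
    simpa [f, tent_neg] using (intervalIntegral.integral_comp_neg (a := 0) (b := 1) f).symm
  have hpos : ∫ x in (0 : ℝ)..1, f x = ∫ x in (0 : ℝ)..1, (1 - x) * cos (a * x) :=
    intervalIntegral.integral_congr fun x hx => by
      rw [Set.uIcc_of_le zero_le_one] at hx
      simp [f, tent, abs_of_nonneg hx.1, hx.2]
  rw [← intervalIntegral.integral_eq_integral_of_support_subset hsupp,
    ← intervalIntegral.integral_add_adjacent_intervals (b := 0) (hf.intervalIntegrable _ _)
      (hf.intervalIntegrable _ _), hneg, hpos, integral_one_sub_mul_cos ha]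
  ring

lemma fourier_tent {ξ : ℝ} (hξ : ξ ≠ 0) :
    𝓕 (fun x => (tent x : ℂ)) ξ = ((2 * ((1 - cos (2 * π * ξ)) / (2 * π * ξ) ^ 2) : ℝ) : ℂ) := by
  rw [fourier_ofReal_of_even integrable_tent tent_neg, integral_tent_mul_cos (by positivity),
    mul_div_assoc]

lemma integral_one_sub_cos_div_sq : ∫ t, (1 - cos t) / t ^ 2 = π := by
  set g := fun t : ℝ => (1 - cos t) / t ^ 2
  have hae : 𝓕 (fun x => (tent x : ℂ)) =ᵐ[volume] fun ξ => ↑(2 * g (2 * π * ξ)) := by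
    filter_upwards [Measure.ae_ne volume 0] with ξ hξ using fourier_tent hξ
  have hint : Integrable (𝓕 (fun x => (tent x : ℂ))) :=
    ((integrable_one_sub_cos_div_sq.comp_mul_left' (by positivity : 2 * π ≠ 0)).const_mul 2
      ).ofReal.congr hae.symm
  have hinv : ∫ ξ, 𝓕 (fun x => (tent x : ℂ)) ξ = 1 := by
    simpa [fourierInv_eq, tent] using integrable_tent.ofReal.fourierInv_fourier_eq hint
      (Complex.continuous_ofReal.comp continuous_tent).continuousAt (v := 0)
  have hscale : ∫ ξ, 2 * g (2 * π * ξ) = π⁻¹ * ∫ t, g t := by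
    rw [integral_const_mul, Measure.integral_comp_mul_left, abs_of_pos (by positivity),
      smul_eq_mul]
    field_simp
  rw [integral_congr_ae hae, integral_complex_ofReal, hscale] at hinv
  exact ((inv_mul_eq_one₀ pi_ne_zero).mp (mod_cast hinv)).symm

/- Valid for all `x` and `t`: at `x = 0` or `t = 0` both sides are `0`, since `0 / 0 = 0`. -/
lemma one_sub_cos_mul_div_sq (x t : ℝ) :
    (1 - cos (t * x)) / t ^ 2 = x ^ 2 * ((1 - cos (x * t)) / (x * t) ^ 2) := by
  rcases eq_or_ne x 0 with rfl | hx
  · simp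
  rcases eq_or_ne t 0 with rfl | ht
  · simp
  rw [mul_comm t x]
  field_simp

lemma one_sub_cos_mul_div_sq_nonneg (x t : ℝ) : 0 ≤ (1 - cos (t * x)) / t ^ 2 :=
  div_nonneg (sub_nonneg.mpr (cos_le_one _)) (sq_nonneg t)

lemma integrable_one_sub_cos_mul_div_sq (x : ℝ) :
    Integrable fun t : ℝ => (1 - cos (t * x)) / t ^ 2 := by
  rcases eq_or_ne x 0 with rfl | hx
  · simp
  simp_rw [one_sub_cos_mul_div_sq x]
  exact (integrable_one_sub_cos_div_sq.comp_mul_left' hx).const_mul _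

lemma integral_one_sub_cos_mul_div_sq (x : ℝ) :
    ∫ t, (1 - cos (t * x)) / t ^ 2 = π * |x| := by
  simp_rw [one_sub_cos_mul_div_sq x]
  rw [integral_const_mul, Measure.integral_comp_mul_left (fun t => (1 - cos t) / t ^ 2),
    integral_one_sub_cos_div_sq, smul_eq_mul, abs_inv, ← sq_abs]
  rcases eq_or_ne x 0 with rfl | hx
  · simp
  field_simp

section Fubini

variable {Ω : Type*} [MeasurableSpace Ω] {μ : Measure Ω} [SFinite μ] {X : Ω → ℝ}

lemma integrable_prod_one_sub_cos_mul_div_sq (hX : Integrable X μ) :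
    Integrable (fun p : ℝ × Ω => (1 - cos (p.1 * X p.2)) / p.1 ^ 2) (volume.prod μ) := by
  have hX2 : AEMeasurable (fun p : ℝ × Ω => X p.2) (volume.prod μ) :=
    hX.aemeasurable.comp_quasiMeasurePreserving Measure.quasiMeasurePreserving_snd
  refine (integrable_prod_iff' (by fun_prop : AEMeasurable _ _).aestronglyMeasurable).mpr ⟨?_, ?_⟩
  · exact .of_forall fun ω => integrable_one_sub_cos_mul_div_sq (X ω)
  · simp_rw [norm_of_nonneg (one_sub_cos_mul_div_sq_nonneg _ _), integral_one_sub_cos_mul_div_sq]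
    exact hX.abs.const_mul π

lemma integral_integral_one_sub_cos_mul_div_sq (hX : Integrable X μ) :
    ∫ t, ∫ ω, (1 - cos (t * X ω)) / t ^ 2 ∂μ = π * ∫ ω, |X ω| ∂μ := by
  rw [integral_integral_swap (integrable_prod_one_sub_cos_mul_div_sq hX)]
  simp_rw [integral_one_sub_cos_mul_div_sq]
  exact integral_const_mul π _

end Fubini

/-- Haagerup's Fourier-analytic formula: for an integrable real random
variable `X`, `E|X| = (1/π) ∫ (1 − Re E[e^{itX}]) t⁻² dt`, where
`Re E[e^{itX}] = E[cos(tX)]`. -/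
theorem abs_expectation_fourier_formula
    {Ω : Type*} [MeasureSpace Ω] [IsProbabilityMeasure (volume : Measure Ω)]
    (X : Ω → ℝ) (hX : Integrable X) :
    ∫ ω, |X ω| = (1 / Real.pi) *
      ∫ t : ℝ, (1 - ∫ ω, Real.cos (t * X ω)) / t ^ 2 := by
  have hcos (t : ℝ) : Integrable fun ω => cos (t * X ω) :=
    .of_bound (by fun_prop) 1 (.of_forall fun ω => by simpa using abs_cos_le_one _)
  have hpull (t : ℝ) :
      (1 - ∫ ω, cos (t * X ω)) / t ^ 2 = ∫ ω, (1 - cos (t * X ω)) / t ^ 2 := by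
    rw [integral_div, integral_sub (integrable_const 1) (hcos t), integral_const, probReal_univ,
      one_smul]
  simp_rw [hpull, integral_integral_one_sub_cos_mul_div_sq hX]
  field_simp
end

section
/- The function F(s) = (2/√(πs)) · Γ((s+1)/2)/Γ(s/2) is nondecreasing on (0, ∞), and equals the infinite product √(2/π) · ∏_{k=0}^∞ (1 − 1/(s+2k+1)²)^{1/2}; in particular F(2) = 1/√2 and F(s) → √(2/π) as s → ∞. -/
/-!
Log-convexity of `Γ` gives `Γ(y + 1/2) ≤ √y Γ(y)`, and the same inequality at `y + 1/2` bounds the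
ratio `Γ(y + 1/2) / (√y Γ(y))` below by `√(y / (y + 1/2))`; hence `F(s) → √(2/π)`. The functional
equation `Γ(y + 1) = y Γ(y)` gives `F(s) = √(1 - 1/(s+1)²) F(s + 2)`; iterating it and letting the
tail `F(s + 2n)` tend to `√(2/π)` yields the product formula, whose factors increase with `s`.
-/

open Real Filter Finset Topology

lemma hasProd_of_tendsto_prod_range_of_nonneg_of_le_one {f : ℕ → ℝ} {a : ℝ}
    (h₀ : ∀ k, 0 ≤ f k) (h₁ : ∀ k, f k ≤ 1)
    (h : Tendsto (fun n ↦ ∏ k ∈ range n, f k) atTop (𝓝 a)) : HasProd f a := by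
  -- Partial products over finsets are antitone, so they converge to their infimum.
  have hanti : Antitone fun S : Finset ℕ ↦ ∏ k ∈ S, f k := fun S T hST ↦ by
    show ∏ k ∈ T, f k ≤ ∏ k ∈ S, f k
    rw [← prod_sdiff hST]
    exact mul_le_of_le_one_left (prod_nonneg fun k _ ↦ h₀ k)
      (prod_le_one (fun k _ ↦ h₀ k) fun k _ ↦ h₁ k)
  have hinf : HasProd f (⨅ S : Finset ℕ, ∏ k ∈ S, f k) :=
    tendsto_atTop_ciInf hanti ⟨0, by rintro _ ⟨S, rfl⟩; exact prod_nonneg fun k _ ↦ h₀ k⟩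
  rwa [tendsto_nhds_unique hinf.tendsto_prod_nat h] at hinf

lemma Real.Gamma_add_half_le {y : ℝ} (hy : 0 < y) : Gamma (y + 1 / 2) ≤ √y * Gamma y := by
  have hconv := Gamma_mul_add_mul_le_rpow_Gamma_mul_rpow_Gamma hy (by positivity : 0 < y + 1)
    one_half_pos one_half_pos (by norm_num)
  rw [Gamma_add_one hy.ne', mul_rpow hy.le (Gamma_pos_of_pos hy).le, ← sqrt_eq_rpow,
    ← sqrt_eq_rpow, mul_left_comm, mul_self_sqrt (Gamma_pos_of_pos hy).le] at hconv
  convert hconv using 2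
  ring

lemma Real.sqrt_div_le_Gamma_add_half_div {y : ℝ} (hy : 0 < y) :
    √(y / (y + 1 / 2)) ≤ Gamma (y + 1 / 2) / (√y * Gamma y) := by
  have hle := Gamma_add_half_le (by positivity : 0 < y + 1 / 2)
  rw [add_assoc, add_halves, Gamma_add_one hy.ne'] at hle
  have := Gamma_pos_of_pos hy
  have := sqrt_pos.2 hy
  rw [sqrt_div hy.le, div_le_div_iff₀ (by positivity) (by positivity), ← mul_assoc,
    mul_self_sqrt hy.le]
  linarith

lemma Real.tendsto_Gamma_add_half_div_atTop :
    Tendsto (fun y ↦ Gamma (y + 1 / 2) / (√y * Gamma y)) atTop (𝓝 1) := by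
  have hlower : Tendsto (fun y : ℝ ↦ √(y / (y + 1 / 2))) atTop (𝓝 1) := by
    have h : Tendsto (fun y : ℝ ↦ 1 - 1 / 2 / (y + 1 / 2)) atTop (𝓝 (1 - 0)) :=
      tendsto_const_nhds.sub <| tendsto_const_nhds.div_atTop <|
        tendsto_atTop_add_const_right _ _ tendsto_id
    have hsqrt := h.sqrt
    rw [sub_zero, sqrt_one] at hsqrt
    refine hsqrt.congr' ((eventually_gt_atTop 0).mono fun y hy ↦ ?_)
    congr 1
    field_simp
    ring
  refine tendsto_of_tendsto_of_tendsto_of_le_of_le' hlower tendsto_const_nhds ?_ ?_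
  · filter_upwards [eventually_gt_atTop 0] with y hy using sqrt_div_le_Gamma_add_half_div hy
  · filter_upwards [eventually_gt_atTop 0] with y hy
    have := Gamma_pos_of_pos hy
    exact div_le_one_of_le₀ (Gamma_add_half_le hy) (by positivity)

noncomputable def haagerupF (s : ℝ) : ℝ :=
  2 / √(π * s) * (Gamma ((s + 1) / 2) / Gamma (s / 2))

lemma haagerupF_pos {s : ℝ} (hs : 0 < s) : 0 < haagerupF s := by
  have := Gamma_pos_of_pos (by positivity : 0 < (s + 1) / 2)
  have := Gamma_pos_of_pos (by positivity : 0 < s / 2)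
  unfold haagerupF
  positivity

lemma haagerupF_eq_sqrt_mul_haagerupF_add_two {s : ℝ} (hs : 0 < s) :
    haagerupF s = √(1 - 1 / (s + 1) ^ 2) * haagerupF (s + 2) := by
  have hfactor : 1 - 1 / (s + 1) ^ 2 = s * (s + 2) / (s + 1) ^ 2 := by
    field_simp
    ring
  have hnum : (s + 2 + 1) / 2 = (s + 1) / 2 + 1 := by ring
  have hden : (s + 2) / 2 = s / 2 + 1 := by ring
  have := Gamma_pos_of_pos (by positivity : 0 < (s + 1) / 2)
  have := Gamma_pos_of_pos (by positivity : 0 < s / 2)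
  unfold haagerupF
  rw [hfactor, hnum, hden, Gamma_add_one (by positivity), Gamma_add_one (by positivity),
    sqrt_div (by positivity), sqrt_sq (by positivity), sqrt_mul hs.le, sqrt_mul pi_pos.le,
    sqrt_mul pi_pos.le]
  field_simp
  rw [sq_sqrt hs.le]

lemma haagerupF_eq_sqrt_two_div_pi_mul {s : ℝ} (hs : 0 < s) :
    haagerupF s = √(2 / π) * (Gamma (s / 2 + 1 / 2) / (√(s / 2) * Gamma (s / 2))) := by
  have := Gamma_pos_of_pos (by positivity : 0 < s / 2)
  have := sqrt_pos.2 hs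
  unfold haagerupF
  rw [add_div, sqrt_mul pi_pos.le, sqrt_div zero_le_two, sqrt_div hs.le]
  field_simp
  rw [sq_sqrt zero_le_two]

lemma tendsto_haagerupF_atTop : Tendsto haagerupF atTop (𝓝 √(2 / π)) := by
  have hratio := tendsto_Gamma_add_half_div_atTop.comp (tendsto_id.atTop_div_const two_pos)
  simpa using (hratio.const_mul √(2 / π)).congr' <|
    (eventually_gt_atTop 0).mono fun s hs ↦ (haagerupF_eq_sqrt_two_div_pi_mul hs).symm

lemma haagerupF_eq_prod_range_mul {s : ℝ} (hs : 0 < s) (n : ℕ) :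
    haagerupF s = (∏ k ∈ range n, √(1 - 1 / (s + 2 * k + 1) ^ 2)) * haagerupF (s + 2 * n) := by
  induction n with
  | zero => simp
  | succ n ih =>
    rw [ih, haagerupF_eq_sqrt_mul_haagerupF_add_two (by positivity), prod_range_succ, mul_assoc]
    push_cast
    ring_nf

lemma hasProd_haagerupF {s : ℝ} (hs : 0 < s) :
    HasProd (fun k : ℕ ↦ √(1 - 1 / (s + 2 * k + 1) ^ 2)) (haagerupF s / √(2 / π)) := by
  refine hasProd_of_tendsto_prod_range_of_nonneg_of_le_one (fun k ↦ sqrt_nonneg _)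
    (fun k ↦ sqrt_le_one.2 (sub_le_self 1 (by positivity))) ?_
  have htail : Tendsto (fun n : ℕ ↦ haagerupF (s + 2 * n)) atTop (𝓝 √(2 / π)) :=
    tendsto_haagerupF_atTop.comp <| tendsto_atTop_add_const_left _ s <|
      tendsto_natCast_atTop_atTop.const_mul_atTop two_pos
  refine (tendsto_const_nhds.div htail (by positivity)).congr fun n ↦ ?_
  rw [Pi.div_apply, div_eq_iff (haagerupF_pos (by positivity)).ne']
  exact haagerupF_eq_prod_range_mul hs n

lemma monotoneOn_haagerupF : MonotoneOn haagerupF (Set.Ioi 0) := by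
  rintro s (hs : 0 < s) t (ht : 0 < t) hst
  have hprod := le_of_tendsto_of_tendsto' (hasProd_haagerupF hs).tendsto_prod_nat
    (hasProd_haagerupF ht).tendsto_prod_nat fun n ↦
      prod_le_prod (fun k _ ↦ sqrt_nonneg _) fun k _ ↦ by gcongr
  exact (div_le_div_iff_of_pos_right (by positivity)).1 hprod

lemma haagerupF_two : haagerupF 2 = 1 / √2 := by
  have hnum : ((2 : ℝ) + 1) / 2 = 1 / 2 + 1 := by norm_num
  unfold haagerupF
  rw [hnum, Gamma_add_one (by norm_num), Gamma_one_half_eq, div_self two_ne_zero, Gamma_one,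
    sqrt_mul pi_pos.le]
  field_simp

/-- The function `F(s) = (2/√(πs)) Γ((s+1)/2)/Γ(s/2)` is nondecreasing on
`(0,∞)`, equals the infinite product
`√(2/π) ∏_{k=0}^∞ (1 − 1/(s+2k+1)²)^{1/2}`, satisfies `F 2 = 1/√2`, and tends
to `√(2/π)` at infinity. -/
theorem haagerup_F_properties :
    let F : ℝ → ℝ := fun s =>
      2 / Real.sqrt (Real.pi * s) * (Real.Gamma ((s + 1) / 2) / Real.Gamma (s / 2))
    MonotoneOn F (Set.Ioi 0) ∧
    (∀ s > (0 : ℝ), F s =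
      Real.sqrt (2 / Real.pi) *
        ∏' k : ℕ, Real.sqrt (1 - 1 / (s + 2 * k + 1) ^ 2)) ∧
    F 2 = 1 / Real.sqrt 2 ∧
    Tendsto F atTop (nhds (Real.sqrt (2 / Real.pi))) := by
  refine ⟨monotoneOn_haagerupF, fun s hs ↦ ?_, haagerupF_two, tendsto_haagerupF_atTop⟩
  show haagerupF s = _
  rw [(hasProd_haagerupF hs).tprod_eq, mul_div_cancel₀ _ (by positivity)]
end

section
/- Two-intersection criterion for the convex stochastic order: let X, Y be real random variables with even densities f and g respectively such that E|X| = E|Y|, and suppose there exist 0 < x₁ < x₂ with {t ≥ 0 : g(t) < f(t)} = (x₁, x₂). Then E φ(X) ≤ E φ(Y) for every even convex function φ : ℝ → [0, ∞]. -/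
/-!
Let `ℓ(t)` be the chord of `φ` over `[x₁, x₂]`, evaluated at `|t|`. By convexity `φ ≤ ℓ` on
`x₁ ≤ |t| ≤ x₂` and `φ ≥ ℓ` elsewhere, while `f > g` exactly on `x₁ < |t| < x₂`; hence
`(φ - ℓ)(f - g) ≤ 0` pointwise. Since `ℓ` is affine in `|t|`, equal masses and equal first
absolute moments give `∫ ℓ f = ∫ ℓ g`, and integrating yields `∫ φ f ≤ ∫ φ g`. In `[0, ∞]` the
chord enters through its positive part, which is harmless because `ℓ < 0` only where `f ≤ g`.

If `φ(x₂) = ∞`, then `φ = ∞` on `|t| ≥ x₂`, and `∫ (|t| - x₁)(f - g) = 0` forces `g` to charge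
that set (the integrand is nonnegative off it and positive on `(x₁, x₂)`), so `∫ φ g = ∞`.
-/

open MeasureTheory ENNReal Set

/-- `ConvexOn ℝ` does not apply here, `ℝ≥0∞` not being an `ℝ`-module. -/
def ConvexENNReal (φ : ℝ → ℝ≥0∞) : Prop :=
  ∀ x y θ : ℝ, 0 ≤ θ → θ ≤ 1 →
    φ (θ * x + (1 - θ) * y) ≤ ENNReal.ofReal θ * φ x + ENNReal.ofReal (1 - θ) * φ y

noncomputable def chord (ψ : ℝ → ℝ) (a b s : ℝ) : ℝ := ψ a + (s - a) * slope ψ a b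

theorem Function.Even.apply_abs {β : Type*} {f : ℝ → β} (hf : Function.Even f) (t : ℝ) :
    f |t| = f t := by
  rcases abs_choice t with h | h <;> rw [h]
  exact hf t

theorem ENNReal.mul_add_mul_le_mul_add_mul_s16 {a b c d : ℝ≥0∞} (hab : a ≤ b) (hcd : c ≤ d) :
    a * d + b * c ≤ a * c + b * d := by
  obtain ⟨e, rfl⟩ := exists_add_of_le hcd
  calc a * (c + e) + b * c = a * c + b * c + a * e := by ring
    _ ≤ a * c + b * c + b * e := by gcongr
    _ = a * c + b * (c + e) := by ring

section Chord

theorem chord_eq_add_mul (ψ : ℝ → ℝ) (a b s : ℝ) :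
    chord ψ a b s = (ψ a - a * slope ψ a b) + slope ψ a b * s := by
  unfold chord; ring

theorem chord_apply_right (ψ : ℝ → ℝ) (a s : ℝ) : chord ψ a s s = ψ s := by
  rw [chord, ← smul_eq_mul, sub_smul_slope, vsub_eq_sub]; ring

variable {D : Set ℝ} {ψ : ℝ → ℝ} {a b s : ℝ}

theorem ConvexOn.le_chord (hψ : ConvexOn ℝ D ψ) (ha : a ∈ D) (hb : b ∈ D) (hs : s ∈ Icc a b) :
    ψ s ≤ chord ψ a b s := by
  rcases hs.1.eq_or_lt with rfl | has
  · simp [chord]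
  have hsD : s ∈ D := (convex_iff_ordConnected.mp hψ.1).out ha hb hs
  have hslope := hψ.slope_mono ha ⟨hsD, has.ne'⟩ ⟨hb, (has.trans_le hs.2).ne'⟩ hs.2
  rw [← chord_apply_right ψ a s, chord, chord]
  gcongr

theorem ConvexOn.chord_le (hψ : ConvexOn ℝ D ψ) (ha : a ∈ D) (hb : b ∈ D) (hab : a < b)
    (hs : s ∈ D) (hs' : s ∉ Ioo a b) : chord ψ a b s ≤ ψ s := by
  rw [← chord_apply_right ψ a s, chord, chord]
  rcases lt_trichotomy s a with hsa | rfl | has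
  · have hslope := hψ.slope_mono ha ⟨hs, hsa.ne⟩ ⟨hb, hab.ne'⟩ (hsa.le.trans hab.le)
    exact add_le_add_right (mul_le_mul_of_nonpos_left hslope (by linarith : s - a ≤ 0)) _
  · simp
  · have hbs : b ≤ s := not_lt.mp fun hsb => hs' ⟨has, hsb⟩
    have hslope := hψ.slope_mono ha ⟨hb, hab.ne'⟩ ⟨hs, has.ne'⟩ hbs
    gcongr

end Chord

namespace ConvexENNReal

variable {φ : ℝ → ℝ≥0∞}

theorem convex_setOf_ne_top (hφ : ConvexENNReal φ) : Convex ℝ {x | φ x ≠ ⊤} := by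
  intro x hx y hy θ η hθ hη hθη
  obtain rfl : η = 1 - θ := by linarith
  exact ne_top_of_le_ne_top (by finiteness) (hφ x y θ hθ (by linarith))

theorem convexOn_toReal (hφ : ConvexENNReal φ) :
    ConvexOn ℝ {x | φ x ≠ ⊤} fun x => (φ x).toReal := by
  refine ⟨hφ.convex_setOf_ne_top, fun x hx y hy θ η hθ hη hθη => ?_⟩
  obtain rfl : η = 1 - θ := by linarith
  calc (φ (θ * x + (1 - θ) * y)).toReal
      ≤ (ENNReal.ofReal θ * φ x + ENNReal.ofReal (1 - θ) * φ y).toReal :=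
        toReal_mono (by finiteness) (hφ x y θ hθ (by linarith))
    _ = θ * (φ x).toReal + (1 - θ) * (φ y).toReal := by
        rw [toReal_add (by finiteness) (by finiteness), toReal_mul, toReal_mul,
          toReal_ofReal hθ, toReal_ofReal hη]

theorem apply_zero_le (hφ : ConvexENNReal φ) (he : Function.Even φ) (t : ℝ) : φ 0 ≤ φ t :=
  calc φ 0 = φ (1 / 2 * t + (1 - 1 / 2) * -t) := by ring_nf
    _ ≤ ENNReal.ofReal (1 / 2) * φ t + ENNReal.ofReal (1 - 1 / 2) * φ (-t) :=
        hφ _ _ _ (by norm_num) (by norm_num)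
    _ = φ t := by
        rw [he, ← add_mul, ← ofReal_add (by norm_num) (by norm_num)]
        norm_num

theorem ne_top_of_abs_le (hφ : ConvexENNReal φ) (he : Function.Even φ) {s t : ℝ}
    (hst : |s| ≤ |t|) (ht : φ t ≠ ⊤) : φ s ≠ ⊤ := by
  rw [← he.apply_abs] at ht ⊢
  have h0 : φ 0 ≠ ⊤ := ne_top_of_le_ne_top ht (hφ.apply_zero_le he _)
  exact (convex_iff_ordConnected.mp hφ.convex_setOf_ne_top).out h0 ht ⟨abs_nonneg s, hst⟩

variable {a b s : ℝ}

theorem le_ofReal_chord (hφ : ConvexENNReal φ) (ha : φ a ≠ ⊤) (hb : φ b ≠ ⊤)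
    (hs : s ∈ Icc a b) : φ s ≤ ENNReal.ofReal (chord (fun x => (φ x).toReal) a b s) := by
  have hsD : φ s ≠ ⊤ := (convex_iff_ordConnected.mp hφ.convex_setOf_ne_top).out ha hb hs
  rw [← ofReal_toReal hsD]
  exact ofReal_le_ofReal (hφ.convexOn_toReal.le_chord ha hb hs)

theorem ofReal_chord_le (hφ : ConvexENNReal φ) (ha : φ a ≠ ⊤) (hb : φ b ≠ ⊤) (hab : a < b)
    (hs : s ∉ Ioo a b) : ENNReal.ofReal (chord (fun x => (φ x).toReal) a b s) ≤ φ s := by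
  by_cases hsD : φ s = ⊤
  · simp [hsD]
  exact ofReal_le_of_le_toReal (hφ.convexOn_toReal.chord_le ha hb hab hsD hs)

end ConvexENNReal

section Exchange

variable {α : Type*} [MeasurableSpace α] {μ : Measure α}

theorem lintegral_mul_le_of_exchange {φ L F G : α → ℝ≥0∞}
    (hL : Measurable L) (hF : Measurable F) (hG : Measurable G)
    (hlt : ∀ x, G x < F x → φ x ≤ L x) (hle : ∀ x, F x ≤ G x → L x ≤ φ x)
    (hLFG : ∫⁻ x, L x * F x ∂μ ≤ ∫⁻ x, L x * G x ∂μ) (hLG : ∫⁻ x, L x * G x ∂μ ≠ ⊤) :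
    ∫⁻ x, φ x * F x ∂μ ≤ ∫⁻ x, φ x * G x ∂μ := by
  have hpt : ∀ x, φ x * F x + L x * G x ≤ φ x * G x + L x * F x := fun x => by
    rcases lt_or_ge (G x) (F x) with h | h
    · exact ENNReal.mul_add_mul_le_mul_add_mul_s16 (hlt x h) h.le
    · simpa only [add_comm] using ENNReal.mul_add_mul_le_mul_add_mul_s16 (hle x h) h
  refine (ENNReal.add_le_add_iff_right hLG).mp ?_
  calc ∫⁻ x, φ x * F x ∂μ + ∫⁻ x, L x * G x ∂μ
      = ∫⁻ x, φ x * F x + L x * G x ∂μ := (lintegral_add_right _ (hL.mul hG)).symm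
    _ ≤ ∫⁻ x, φ x * G x + L x * F x ∂μ := lintegral_mono hpt
    _ = ∫⁻ x, φ x * G x ∂μ + ∫⁻ x, L x * F x ∂μ := lintegral_add_right _ (hL.mul hF)
    _ ≤ ∫⁻ x, φ x * G x ∂μ + ∫⁻ x, L x * G x ∂μ := by gcongr

theorem lintegral_ofReal_mul_le_of_integral_eq {h F G : α → ℝ}
    (hF : ∀ x, 0 ≤ F x) (hG : ∀ x, 0 ≤ G x)
    (hhF : Integrable (fun x => h x * F x) μ) (hhG : Integrable (fun x => h x * G x) μ)
    (heq : ∫ x, h x * F x ∂μ = ∫ x, h x * G x ∂μ) (hneg : ∀ x, h x < 0 → F x ≤ G x) :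
    ∫⁻ x, ENNReal.ofReal (h x) * ENNReal.ofReal (F x) ∂μ ≤
      ∫⁻ x, ENNReal.ofReal (h x) * ENNReal.ofReal (G x) ∂μ := by
  simp_rw [← ofReal_mul' (hF _), ← ofReal_mul' (hG _)]
  -- The negative parts are ordered pointwise, so equal integrals order the positive parts.
  have hneg_le : ∫⁻ x, ENNReal.ofReal (-(h x * F x)) ∂μ ≤
      ∫⁻ x, ENNReal.ofReal (-(h x * G x)) ∂μ := lintegral_mono fun x => by
    rcases lt_or_ge (h x) 0 with hx | hx
    · exact ofReal_le_ofReal (by nlinarith [hneg x hx])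
    · rw [ofReal_eq_zero.mpr (by nlinarith [hF x])]
      exact bot_le
  rw [integral_eq_lintegral_pos_part_sub_lintegral_neg_part hhF,
    integral_eq_lintegral_pos_part_sub_lintegral_neg_part hhG] at heq
  have hGfin : ∫⁻ x, ENNReal.ofReal (-(h x * G x)) ∂μ ≠ ⊤ := hhG.neg.lintegral_lt_top.ne
  have hneg_toReal := toReal_mono hGfin hneg_le
  rw [← toReal_le_toReal hhF.lintegral_lt_top.ne hhG.lintegral_lt_top.ne]
  linarith

theorem lintegral_mul_eq_top_of_eq_top_on {φ G : α → ℝ≥0∞} {S : Set α} (hS : MeasurableSet S)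
    (hG : Measurable G) (hφ : ∀ x ∈ S, φ x = ⊤) (hGS : ∫⁻ x in S, G x ∂μ ≠ 0) :
    ∫⁻ x, φ x * G x ∂μ = ⊤ := by
  refine eq_top_iff.mpr ?_
  calc ⊤ = ∫⁻ x in S, ⊤ * G x ∂μ := by rw [lintegral_const_mul _ hG, top_mul hGS]
    _ ≤ ∫⁻ x in S, φ x * G x ∂μ := setLIntegral_mono' hS fun x hx => by rw [hφ x hx]
    _ ≤ ∫⁻ x, φ x * G x ∂μ := setLIntegral_le_lintegral _ _

end Exchange

def EqualAffineAbsMoments (f g : ℝ → ℝ) : Prop :=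
  ∀ a b : ℝ, Integrable (fun t => (a + b * |t|) * f t) ∧
    Integrable (fun t => (a + b * |t|) * g t) ∧
    ∫ t, (a + b * |t|) * f t = ∫ t, (a + b * |t|) * g t

theorem equalAffineAbsMoments_of_integral_eq {f g : ℝ → ℝ} (hf : Integrable f)
    (hg : Integrable g) (hXf : Integrable fun t => |t| * f t) (hYg : Integrable fun t => |t| * g t)
    (hmass : ∫ t, f t = ∫ t, g t) (hmom : ∫ t, |t| * f t = ∫ t, |t| * g t) :
    EqualAffineAbsMoments f g := fun a b => by
  simp_rw [add_mul, mul_assoc]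
  refine ⟨(hf.const_mul a).add (hXf.const_mul b), (hg.const_mul a).add (hYg.const_mul b), ?_⟩
  rw [integral_add (hf.const_mul a) (hXf.const_mul b),
    integral_add (hg.const_mul a) (hYg.const_mul b), integral_const_mul, integral_const_mul,
    integral_const_mul, integral_const_mul, hmass, hmom]

theorem lt_iff_abs_mem_of_even {f g : ℝ → ℝ} {I : Set ℝ} (hf : Function.Even f)
    (hg : Function.Even g) (hI : {t | 0 ≤ t ∧ g t < f t} = I) (t : ℝ) :
    g t < f t ↔ |t| ∈ I := by
  simp [← hI, hf.apply_abs, hg.apply_abs]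

section Crossing

variable {f g : ℝ → ℝ} {x₁ x₂ : ℝ}

theorem setLIntegral_ofReal_ne_zero_of_crossing (hf0 : ∀ t, 0 ≤ f t) (hg : Measurable g)
    (hg0 : ∀ t, 0 ≤ g t) (hfg : EqualAffineAbsMoments f g)
    (hcross : ∀ t, g t < f t ↔ |t| ∈ Ioo x₁ x₂) (hx₁ : 0 ≤ x₁) (hx₁₂ : x₁ < x₂) :
    ∫⁻ t in {t | x₂ ≤ |t|}, ENNReal.ofReal (g t) ≠ 0 := by
  intro hzero
  have hgS : ∀ᵐ t, t ∈ {t | x₂ ≤ |t|} → g t = 0 := by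
    rw [← ae_restrict_iff' (measurableSet_le measurable_const measurable_abs)]
    filter_upwards [(lintegral_eq_zero_iff hg.ennreal_ofReal).mp hzero] with t ht
    exact le_antisymm (ofReal_eq_zero.mp ht) (hg0 t)
  obtain ⟨hif, hig, heq⟩ := hfg (-x₁) 1
  set w := fun t => (-x₁ + 1 * |t|) * f t - (-x₁ + 1 * |t|) * g t
  have hw_pos : ∀ t, |t| ∈ Ioo x₁ x₂ → 0 < w t := fun t ht => by
    have hlt := (hcross t).mpr ht
    simp only [w]
    nlinarith [ht.1]
  have hw_nonneg : 0 ≤ᵐ[volume] w := by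
    filter_upwards [hgS] with t ht
    by_cases hm : |t| ∈ Ioo x₁ x₂
    · exact (hw_pos t hm).le
    rcases le_or_gt x₂ |t| with h₂ | h₂
    · simp only [w, ht h₂, mul_zero, sub_zero, Pi.zero_apply]
      exact mul_nonneg (by linarith) (hf0 t)
    · have h₁ : |t| ≤ x₁ := not_lt.mp fun h₁ => hm ⟨h₁, h₂⟩
      have hfg' : f t ≤ g t := not_lt.mp fun h => hm ((hcross t).mp h)
      simp only [w, Pi.zero_apply]
      nlinarith
  have hw_int_pos : 0 < ∫ t, w t := by
    rw [integral_pos_iff_support_of_nonneg_ae hw_nonneg (hif.sub hig)]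
    refine lt_of_lt_of_le ?_ (measure_mono (s := Ioo x₁ x₂) fun t ht => (hw_pos t ?_).ne')
    · rw [Real.volume_Ioo]
      exact ofReal_pos.mpr (sub_pos.mpr hx₁₂)
    · rwa [abs_of_nonneg (hx₁.trans ht.1.le)]
  rw [integral_sub hif hig, heq, sub_self] at hw_int_pos
  exact hw_int_pos.false

theorem lintegral_mul_ofReal_le_of_crossing {φ : ℝ → ℝ≥0∞} (hφ : ConvexENNReal φ)
    (hφe : Function.Even φ) (hf : Measurable f) (hg : Measurable g) (hf0 : ∀ t, 0 ≤ f t)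
    (hg0 : ∀ t, 0 ≤ g t) (hfg : EqualAffineAbsMoments f g)
    (hcross : ∀ t, g t < f t ↔ |t| ∈ Ioo x₁ x₂) (hx₁₂ : x₁ < x₂)
    (h₁ : φ x₁ ≠ ⊤) (h₂ : φ x₂ ≠ ⊤) :
    ∫⁻ t, φ t * ENNReal.ofReal (f t) ≤ ∫⁻ t, φ t * ENNReal.ofReal (g t) := by
  set ψ := fun x => (φ x).toReal
  set ℓ := fun t => chord ψ x₁ x₂ |t|
  obtain ⟨hℓf, hℓg, hℓeq⟩ := hfg (ψ x₁ - x₁ * slope ψ x₁ x₂) (slope ψ x₁ x₂)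
  simp_rw [← chord_eq_add_mul] at hℓf hℓg hℓeq
  refine lintegral_mul_le_of_exchange (L := fun t => ENNReal.ofReal (ℓ t))
    (by simp only [ℓ, chord_eq_add_mul]; fun_prop) hf.ennreal_ofReal hg.ennreal_ofReal
    (fun t ht => ?_) (fun t ht => ?_) ?_ ?_
  · rw [← hφe.apply_abs]
    have hm := (hcross t).mp ((ofReal_lt_ofReal_iff_of_nonneg (hg0 t)).mp ht)
    exact hφ.le_ofReal_chord h₁ h₂ (Ioo_subset_Icc_self hm)
  · rw [← hφe.apply_abs]
    refine hφ.ofReal_chord_le h₁ h₂ hx₁₂ fun hm => ?_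
    exact ((ofReal_le_ofReal_iff (hg0 t)).mp ht).not_gt ((hcross t).mpr hm)
  · refine lintegral_ofReal_mul_le_of_integral_eq hf0 hg0 hℓf hℓg hℓeq fun t hneg => ?_
    refine not_lt.mp fun hlt => hneg.not_ge ?_
    exact toReal_nonneg.trans
      (hφ.convexOn_toReal.le_chord h₁ h₂ (Ioo_subset_Icc_self ((hcross t).mp hlt)))
  · simp_rw [← ofReal_mul' (hg0 _)]
    exact hℓg.lintegral_lt_top.ne

end Crossing

/-- Two-intersection criterion for the convex stochastic order: if `X`, `Y`
have even probability densities `f`, `g` with `E|X| = E|Y|`, and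
`{t ≥ 0 : g t < f t}` is an interval `(x₁, x₂)` with `0 < x₁ < x₂`, then
`E φ(X) ≤ E φ(Y)` for every even convex `φ : ℝ → [0,∞]`. Expectations are
computed via the densities. -/
theorem convex_order_two_intersections
    (f g : ℝ → ℝ) (hf : Measurable f) (hg : Measurable g)
    (hf0 : ∀ t, 0 ≤ f t) (hg0 : ∀ t, 0 ≤ g t)
    (hfe : ∀ t, f (-t) = f t) (hge : ∀ t, g (-t) = g t)
    (hfd : ∫⁻ t, ENNReal.ofReal (f t) = 1)
    (hgd : ∫⁻ t, ENNReal.ofReal (g t) = 1)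
    (hXint : Integrable (fun t => |t| * f t))
    (hYint : Integrable (fun t => |t| * g t))
    (hmom : ∫ t, |t| * f t = ∫ t, |t| * g t)
    (x₁ x₂ : ℝ) (hx₁ : 0 < x₁) (hx₁₂ : x₁ < x₂)
    (hcross : {t : ℝ | 0 ≤ t ∧ g t < f t} = Set.Ioo x₁ x₂)
    (φ : ℝ → ℝ≥0∞) (hφe : ∀ t, φ (-t) = φ t)
    (hφc : ∀ x y : ℝ, ∀ θ : ℝ, 0 ≤ θ → θ ≤ 1 →
      φ (θ * x + (1 - θ) * y) ≤
        ENNReal.ofReal θ * φ x + ENNReal.ofReal (1 - θ) * φ y) :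
    ∫⁻ t, φ t * ENNReal.ofReal (f t) ≤ ∫⁻ t, φ t * ENNReal.ofReal (g t) := by
  have hφ : ConvexENNReal φ := hφc
  have hfi : Integrable f :=
    ⟨hf.aestronglyMeasurable, (hasFiniteIntegral_iff_ofReal (ae_of_all _ hf0)).mpr (by simp [hfd])⟩
  have hgi : Integrable g :=
    ⟨hg.aestronglyMeasurable, (hasFiniteIntegral_iff_ofReal (ae_of_all _ hg0)).mpr (by simp [hgd])⟩
  have hmass : ∫ t, f t = ∫ t, g t := by
    rw [integral_eq_lintegral_of_nonneg_ae (ae_of_all _ hf0) hf.aestronglyMeasurable, hfd,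
      integral_eq_lintegral_of_nonneg_ae (ae_of_all _ hg0) hg.aestronglyMeasurable, hgd]
  have hfg := equalAffineAbsMoments_of_integral_eq hfi hgi hXint hYint hmass hmom
  have hcross' := lt_iff_abs_mem_of_even hfe hge hcross
  have hx₂ : |x₂| = x₂ := abs_of_pos (hx₁.trans hx₁₂)
  by_cases hφ₂ : φ x₂ = ⊤
  · have hφS : ∀ t ∈ {t : ℝ | x₂ ≤ |t|}, φ t = ⊤ := fun t ht => by
      by_contra h
      exact hφ.ne_top_of_abs_le hφe (hx₂.trans_le ht) h hφ₂
    rw [lintegral_mul_eq_top_of_eq_top_on (measurableSet_le measurable_const measurable_abs)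
      hg.ennreal_ofReal hφS
      (setLIntegral_ofReal_ne_zero_of_crossing hf0 hg hg0 hfg hcross' hx₁.le hx₁₂)]
    exact le_top
  · have hφ₁ : φ x₁ ≠ ⊤ :=
      hφ.ne_top_of_abs_le hφe (by rw [hx₂, abs_of_pos hx₁]; exact hx₁₂.le) hφ₂
    exact lintegral_mul_ofReal_le_of_crossing hφ hφe hf hg hf0 hg0 hfg hcross' hx₁₂ hφ₁ hφ₂
end

section
/- Dirac-delta behaviour of negative-moment approximation: let k ≥ 1, B the unit ball of a norm ‖·‖ on ℝ^k, and f : ℝ^k → [0,∞) an integrable function continuous at 0. Then lim_{q → −k⁺} ((k+q)/(k·vol_k(B))) ∫_{ℝ^k} ‖x‖^q f(x) dx = f(0). -/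
/-!
The kernels `φ_q x = (k + q) / (k vol B) * ‖x‖ ^ q` form an approximate identity at `0` as
`q → -k⁺`. In polar coordinates `∫_B ‖x‖ ^ q = k vol B / (k + q)`, so each `φ_q` is nonnegative
with integral one on `B`; off any neighbourhood of `0` they are bounded by a multiple of `k + q`,
hence tend to zero uniformly. The peak-function lemma then gives `∫ φ_q f → f 0`.
-/

open MeasureTheory Filter Set Metric Module Topology

theorem measureReal_closedBall_pos {X : Type*} [PseudoMetricSpace X] [ProperSpace X]
    [MeasurableSpace X] (μ : Measure X) [μ.IsOpenPosMeasure] [IsFiniteMeasureOnCompacts μ]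
    (x : X) {r : ℝ} (hr : 0 < r) : 0 < μ.real (closedBall x r) :=
  ENNReal.toReal_pos (measure_closedBall_pos μ x hr).ne' measure_closedBall_lt_top.ne

section

variable {E : Type*} [NormedAddCommGroup E] [NormedSpace ℝ E] [MeasurableSpace E] (μ : Measure E)

noncomputable def normRpowKernel (q : ℝ) (x : E) : ℝ :=
  (finrank ℝ E + q) / (finrank ℝ E * μ.real (closedBall 0 1)) * ‖x‖ ^ q

variable [FiniteDimensional ℝ E] [μ.IsAddHaarMeasure]

theorem normRpowKernel_nonneg {q : ℝ} (hq : -(finrank ℝ E : ℝ) < q) (x : E) :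
    0 ≤ normRpowKernel μ q x := by
  have := measureReal_closedBall_pos μ 0 zero_lt_one
  unfold normRpowKernel
  have : 0 < (finrank ℝ E + q) := by linarith
  positivity

variable [Nontrivial E]

theorem tendstoUniformlyOn_normRpowKernel {u : Set E} (hu : u ∈ 𝓝 0) :
    TendstoUniformlyOn (normRpowKernel μ) 0 (𝓝[>] (-(finrank ℝ E : ℝ))) uᶜ := by
  obtain ⟨r, hr, hru⟩ := Metric.mem_nhds_iff.1 hu
  set c : ℝ → ℝ := fun q => (finrank ℝ E + q) / (finrank ℝ E * μ.real (closedBall 0 1))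
  have hbound : Tendsto (fun q => c q * r ^ q) (𝓝[>] (-(finrank ℝ E : ℝ))) (𝓝 0) := by
    have hcont : ContinuousAt (fun q => c q * r ^ q) (-(finrank ℝ E : ℝ)) :=
      ((continuous_const.add continuous_id).div_const _).continuousAt.mul
        (Real.continuousAt_const_rpow hr.ne')
    simpa [c] using hcont.tendsto.mono_left nhdsWithin_le_nhds
  have hneg : ∀ᶠ q in 𝓝[>] (-(finrank ℝ E : ℝ)), q < 0 := by
    have hd : (0 : ℝ) < finrank ℝ E := by exact_mod_cast Module.finrank_pos
    exact nhdsWithin_le_nhds (eventually_lt_nhds (by linarith))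
  rw [tendstoUniformlyOn_iff]
  intro ε hε
  filter_upwards [hbound.eventually_lt_const hε, hneg, self_mem_nhdsWithin] with q hqε hq0 hqd x hx
  have hxr : r ≤ ‖x‖ := by
    by_contra! h
    exact hx (hru (mem_ball_zero_iff.2 h))
  have hc : 0 ≤ c q := by
    have := measureReal_closedBall_pos μ 0 zero_lt_one
    have : 0 < (finrank ℝ E + q) := by linarith [mem_Ioi.1 hqd]
    positivity
  rw [Pi.zero_apply, dist_zero_left, Real.norm_of_nonneg (normRpowKernel_nonneg μ hqd x)]
  calc normRpowKernel μ q x = c q * ‖x‖ ^ q := rfl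
    _ ≤ c q * r ^ q := mul_le_mul_of_nonneg_left (Real.rpow_le_rpow_of_nonpos hr hxr hq0.le) hc
    _ < ε := hqε

variable [BorelSpace E]

theorem setIntegral_closedBall_norm_rpow {q r : ℝ} (hq : -(finrank ℝ E : ℝ) < q) (hr : 0 < r) :
    ∫ x in closedBall (0 : E) r, ‖x‖ ^ q ∂μ
      = finrank ℝ E / (finrank ℝ E + q) * r ^ (finrank ℝ E + q) * μ.real (closedBall 0 1) := by
  set d := finrank ℝ E
  have hd : 1 ≤ d := Module.finrank_pos
  have hdq : 0 < (d : ℝ) + q := by linarith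
  have radial : ∫ x in closedBall (0 : E) r, ‖x‖ ^ q ∂μ
      = ∫ x, (Iic r).indicator (fun y : ℝ => y ^ q) ‖x‖ ∂μ := by
    rw [← integral_indicator measurableSet_closedBall]
    congr 1 with x
    simp [indicator]
  have polar : ∫ y in Ioi (0 : ℝ), y ^ (d - 1) • (Iic r).indicator (fun y : ℝ => y ^ q) y
      = ∫ y in (0 : ℝ)..r, y ^ ((d : ℝ) + q - 1) := by
    rw [intervalIntegral.integral_of_le hr.le, ← Ioi_inter_Iic,
      ← setIntegral_indicator measurableSet_Iic]
    refine setIntegral_congr_fun measurableSet_Ioi fun y (hy : 0 < y) => ?_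
    by_cases hyr : y ≤ r
    · simp only [indicator_of_mem (show y ∈ Iic r from hyr), smul_eq_mul]
      rw [← Real.rpow_natCast, ← Real.rpow_add hy, Nat.cast_sub hd]
      ring_nf
    · simp [indicator_of_notMem (show y ∉ Iic r from hyr)]
  rw [radial, integral_fun_norm_addHaar, polar, integral_rpow (Or.inl (by linarith)),
    sub_add_cancel, Real.zero_rpow hdq.ne', measureReal_def, measureReal_def,
    Measure.addHaar_closedBall_eq_addHaar_ball, smul_eq_mul, nsmul_eq_mul]
  field_simp
  ring

theorem setIntegral_closedBall_normRpowKernel {q : ℝ} (hq : -(finrank ℝ E : ℝ) < q) :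
    ∫ x in closedBall (0 : E) 1, normRpowKernel μ q x ∂μ = 1 := by
  have hV := measureReal_closedBall_pos μ 0 zero_lt_one
  have hd : (0 : ℝ) < finrank ℝ E := by exact_mod_cast Module.finrank_pos
  have hdq : (0 : ℝ) < finrank ℝ E + q := by linarith
  simp only [normRpowKernel]
  rw [integral_const_mul, setIntegral_closedBall_norm_rpow μ hq zero_lt_one, Real.one_rpow]
  field_simp

theorem tendsto_smul_integral_norm_rpow_smul {F : Type*} [NormedAddCommGroup F]
    [NormedSpace ℝ F] [CompleteSpace F] {g : E → F} (hg : Integrable g μ) (hg0 : ContinuousAt g 0) :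
    Tendsto (fun q : ℝ => ((finrank ℝ E + q) / (finrank ℝ E * μ.real (closedBall 0 1))) •
        ∫ x, ‖x‖ ^ q • g x ∂μ) (𝓝[>] (-(finrank ℝ E : ℝ))) (𝓝 (g 0)) := by
  have := tendsto_integral_peak_smul_of_integrable_of_tendsto (μ := μ) (φ := normRpowKernel μ)
    (t := closedBall 0 1) measurableSet_closedBall (closedBall_mem_nhds 0 zero_lt_one)
    measure_closedBall_lt_top.ne
    (eventually_nhdsWithin_of_forall fun q hq => normRpowKernel_nonneg μ hq)
    (fun u hu h0 => tendstoUniformlyOn_normRpowKernel μ (hu.mem_nhds h0))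
    (tendsto_const_nhds.congr' (eventually_nhdsWithin_of_forall fun q hq =>
      (setIntegral_closedBall_normRpowKernel μ hq).symm))
    (Eventually.of_forall fun q =>
      ((measurable_norm.pow_const q).const_mul _).aestronglyMeasurable) hg hg0
  refine this.congr fun q => ?_
  simp only [normRpowKernel, mul_smul, integral_smul]

end

section NormedBy

variable {V : Type*} [AddCommGroup V] [Module ℝ V]

/-- A copy of `V` to carry the norm `N`, which on `V` itself would clash with an existing norm
(the sup norm on `Fin k → ℝ`). -/
def NormedBy (_ : V → ℝ) : Type _ := V

namespace NormedBy

variable (N : V → ℝ)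

instance : AddCommGroup (NormedBy N) := inferInstanceAs (AddCommGroup V)
instance : Module ℝ (NormedBy N) := inferInstanceAs (Module ℝ V)
instance : Norm (NormedBy N) := ⟨N⟩
instance [FiniteDimensional ℝ V] : FiniteDimensional ℝ (NormedBy N) :=
  inferInstanceAs (FiniteDimensional ℝ V)
instance [Nontrivial V] : Nontrivial (NormedBy N) := inferInstanceAs (Nontrivial V)

def equiv : V ≃ₗ[ℝ] NormedBy N := LinearEquiv.refl ℝ V

theorem normedSpaceCore (hN0 : ∀ x, N x = 0 ↔ x = 0) (hNs : ∀ (c : ℝ) (x), N (c • x) = |c| * N x)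
    (hNt : ∀ x y, N (x + y) ≤ N x + N y) : NormedSpace.Core ℝ (NormedBy N) := by
  have nonneg (x : V) : 0 ≤ N x := by
    have h := hNt x ((-1 : ℝ) • x)
    rw [hNs, neg_one_smul, add_neg_cancel, (hN0 0).2 rfl] at h
    norm_num at h
    exact h
  exact ⟨⟨nonneg, hNs, hNt⟩, hN0⟩

end NormedBy

end NormedBy

theorem negative_moment_dirac_limit_general
    (k : ℕ) (hk : 1 ≤ k) (N : (Fin k → ℝ) → ℝ)
    (hN0 : ∀ x, N x = 0 ↔ x = 0)
    (hNs : ∀ (c : ℝ) (x), N (c • x) = |c| * N x)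
    (hNt : ∀ x y, N (x + y) ≤ N x + N y)
    (f : (Fin k → ℝ) → ℝ)
    (hfi : Integrable f) (hfc : ContinuousAt f 0) :
    Tendsto
      (fun q : ℝ =>
        ((k + q) / (k * (volume {x : Fin k → ℝ | N x ≤ 1}).toReal)) *
          ∫ x : Fin k → ℝ, N x ^ q * f x)
      (nhdsWithin (-(k : ℝ)) (Set.Ioi (-(k : ℝ)))) (nhds (f 0)) := by
  have : Nonempty (Fin k) := ⟨⟨0, hk⟩⟩
  let := NormedAddCommGroup.ofCore (NormedBy.normedSpaceCore N hN0 hNs hNt)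
  let := NormedSpace.ofCore (NormedBy.normedSpaceCore N hN0 hNs hNt)
  let : MeasurableSpace (NormedBy N) := borel _
  have : BorelSpace (NormedBy N) := ⟨rfl⟩
  let e := (NormedBy.equiv N).toContinuousLinearEquiv
  have he : MeasurableEmbedding e := e.toHomeomorph.measurableEmbedding
  have hdim : finrank ℝ (NormedBy N) = k :=
    (NormedBy.equiv N).finrank_eq.symm.trans (finrank_fin_fun ℝ)
  have hlim := tendsto_smul_integral_norm_rpow_smul (volume.map e) (g := f ∘ e.symm)
    (he.integrable_map_iff.2 (by simpa [Function.comp_def] using hfi))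
    (hfc.comp_of_eq e.symm.continuous.continuousAt (map_zero _))
  rw [hdim] at hlim
  convert hlim using 2 with q
  · have hB : e ⁻¹' closedBall 0 1 = {x | N x ≤ 1} := by
      ext x
      exact mem_closedBall_zero_iff
    rw [smul_eq_mul, measureReal_def, he.map_apply, he.integral_map, hB]
    simp only [Function.comp_apply, ContinuousLinearEquiv.symm_apply_apply, smul_eq_mul]
    rfl
  · simp

/-- Dirac-delta behaviour of the negative-moment approximation: for a norm
`N` on `ℝ^k` with unit ball `B` and an integrable `f : ℝ^k → [0,∞)` continuous
at `0`, `((k+q)/(k·vol(B))) ∫ N(x)^q f(x) dx → f 0` as `q → −k⁺`. -/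
theorem negative_moment_dirac_limit
    (k : ℕ) (hk : 1 ≤ k) (N : (Fin k → ℝ) → ℝ)
    (hN0 : ∀ x, N x = 0 ↔ x = 0)
    (hNs : ∀ (c : ℝ) (x), N (c • x) = |c| * N x)
    (hNt : ∀ x y, N (x + y) ≤ N x + N y)
    (f : (Fin k → ℝ) → ℝ) (hf0 : ∀ x, 0 ≤ f x)
    (hfi : Integrable f) (hfc : ContinuousAt f 0) :
    Tendsto
      (fun q : ℝ =>
        ((k + q) / (k * (volume {x : Fin k → ℝ | N x ≤ 1}).toReal)) *
          ∫ x : Fin k → ℝ, N x ^ q * f x)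
      (nhdsWithin (-(k : ℝ)) (Set.Ioi (-(k : ℝ)))) (nhds (f 0)) :=
  negative_moment_dirac_limit_general k hk N hN0 hNs hNt f hfi hfc
end
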